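/- arXiv:1707.08919 — 6 statements merged into one kernel-verified Lean document; each statement's English description precedes it below -/
import Mathlib

section
/- Let ε > 0 and δ ∈ (0,1). Let μ ≥ 0 satisfy Q(μ) = δ, where Q(x) = (1/√(2π)) ∫_x^∞ exp(−u²/2) du, and set κ = (μ + √(μ² + 2ε))/(2ε). Let k be a positive integer, let m, m' ∈ ℝ^k with ‖m − m'‖₂ ≤ Δ for some Δ > 0, and let σ = κΔ. Then for every Borel measurable set S ⊆ ℝ^k, the Gaussian measures ν = ⨂_{i=1}^k N(m_i, σ²) and ν' = ⨂_{i=1}^k N(m'_i, σ²) satisfy ν(S) ≤ e^ε · ν'(S) + δ. -/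
/-!
The density of `ν` with respect to `ν'` is `exp L`, where the privacy loss
`L x = ⟪m - m', x - (m + m') / 2⟫ / σ²` is affine in `x`; under `ν` it is therefore Gaussian with
mean `a² / (2σ²)` and variance `a² / σ²`, where `a = ‖m - m'‖`. On `S ∩ {L ≤ ε}` we get
`ν ≤ e^ε ν'`, and `ν {L > ε} = Q(εσ/a - a/(2σ)) ≤ Q(μ) = δ`: since `κ` is the positive root of
`2εκ² = 2μκ + 1`, the threshold `εσ/a - a/(2σ)` is at least `μ` whenever `a ≤ Δ`.
-/

open MeasureTheory ProbabilityTheory Real Set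
open scoped ENNReal NNReal

namespace MeasureTheory

lemma withDensity_inter_le_mul {α : Type*} [MeasurableSpace α] (ρ : Measure α)
    {f : α → ℝ≥0∞} {s t : Set α} (hs : MeasurableSet s) (ht : MeasurableSet t) {c : ℝ≥0∞}
    (hf : ∀ x ∈ t, f x ≤ c) :
    ρ.withDensity f (s ∩ t) ≤ c * ρ s := calc
  ρ.withDensity f (s ∩ t) = ∫⁻ x in s ∩ t, f x ∂ρ := withDensity_apply _ (hs.inter ht)
  _ ≤ ∫⁻ _ in s ∩ t, c ∂ρ := setLIntegral_mono measurable_const fun x hx ↦ hf x hx.2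
  _ = c * ρ (s ∩ t) := setLIntegral_const _ _
  _ ≤ c * ρ s := by gcongr; exact inter_subset_left

namespace Measure

lemma pi_withDensity {ι : Type*} [Fintype ι] {α : ι → Type*} [∀ i, MeasurableSpace (α i)]
    (μ : ∀ i, Measure (α i)) [∀ i, IsProbabilityMeasure (μ i)] {f : ∀ i, α i → ℝ≥0∞}
    (hf : ∀ i, Measurable (f i)) [∀ i, SigmaFinite ((μ i).withDensity (f i))] :
    Measure.pi (fun i ↦ (μ i).withDensity (f i))
      = (Measure.pi μ).withDensity (fun x ↦ ∏ i, f i (x i)) := by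
  refine pi_eq fun s hs ↦ ?_
  have hbox : (univ.pi s).indicator (fun x ↦ ∏ i, f i (x i))
      = fun x ↦ ∏ i, (s i).indicator (f i) (x i) := by
    ext x
    by_cases hx : x ∈ univ.pi s
    · simp_all [indicator_of_mem]
    · obtain ⟨i, hi⟩ : ∃ i, x i ∉ s i := by simpa using hx
      rw [indicator_of_notMem hx,
        Finset.prod_eq_zero (Finset.mem_univ i) (indicator_of_notMem hi _)]
  have hmeas : ∀ i, Measurable ((s i).indicator (f i)) := fun i ↦ (hf i).indicator (hs i)
  rw [withDensity_apply _ (.univ_pi hs), ← lintegral_indicator (.univ_pi hs), hbox,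
    lintegral_prod_eq_prod_lintegral_of_indepFun _ _ (iIndepFun_pi fun i ↦ (hmeas i).aemeasurable)
      fun i ↦ (hmeas i).comp (measurable_pi_apply i)]
  refine Finset.prod_congr rfl fun i _ ↦ ?_
  rw [(measurePreserving_eval μ i).lintegral_comp (hmeas i), lintegral_indicator (hs i),
    withDensity_apply _ (hs i)]

end Measure

end MeasureTheory

namespace ProbabilityTheory

lemma gaussianPDFReal_eq_exp_mul (m m' : ℝ) {v : ℝ≥0} (hv : v ≠ 0) (t : ℝ) :
    gaussianPDFReal m v t
      = exp ((m - m') * (2 * t - m - m') / (2 * v)) * gaussianPDFReal m' v t := by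
  have hv' : (v : ℝ) ≠ 0 := by exact_mod_cast hv
  simp only [gaussianPDFReal]
  rw [mul_left_comm, ← exp_add]
  congr 2
  field_simp
  ring

lemma gaussianReal_eq_withDensity_exp (m m' : ℝ) {v : ℝ≥0} (hv : v ≠ 0) :
    gaussianReal m v = (gaussianReal m' v).withDensity
      (fun t ↦ ENNReal.ofReal (exp ((m - m') * (2 * t - m - m') / (2 * v)))) := by
  rw [gaussianReal_of_var_ne_zero _ hv, gaussianReal_of_var_ne_zero _ hv,
    ← withDensity_mul _ (measurable_gaussianPDF _ _) (by fun_prop)]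
  congr 1
  ext t
  simp only [Pi.mul_apply, gaussianPDF, ← ENNReal.ofReal_mul (gaussianPDFReal_nonneg _ _ _),
    gaussianPDFReal_eq_exp_mul m m' hv t, mul_comm]

lemma map_sum_pi_gaussianReal {ι : Type*} [Fintype ι] (m : ι → ℝ) (v : ι → ℝ≥0) :
    (Measure.pi fun i ↦ gaussianReal (m i) (v i)).map (fun x ↦ ∑ i, x i)
      = gaussianReal (∑ i, m i) (∑ i, v i) := by
  refine Measure.ext_of_charFun (funext fun t ↦ ?_)
  rw [charFun_map_sum_pi_eq_prod, Finset.prod_apply]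
  simp only [charFun_gaussianReal, ← Complex.exp_sum]
  push_cast
  congr 1
  simp only [Finset.mul_sum, Finset.sum_mul, ← Finset.sum_sub_distrib, Finset.sum_div]

lemma gaussianReal_map_affine (m : ℝ) (v : ℝ≥0) (c b : ℝ) :
    (gaussianReal m v).map (fun t ↦ c * t + b)
      = gaussianReal (c * m + b) (.mk (c ^ 2) (sq_nonneg c) * v) := by
  rw [← gaussianReal_map_add_const, ← gaussianReal_map_const_mul,
    Measure.map_map (by fun_prop) (by fun_prop)]
  rfl

lemma map_sum_affine_pi_gaussianReal {ι : Type*} [Fintype ι] (m : ι → ℝ) (v : ι → ℝ≥0)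
    (c b : ι → ℝ) :
    (Measure.pi fun i ↦ gaussianReal (m i) (v i)).map (fun x ↦ ∑ i, (c i * x i + b i))
      = gaussianReal (∑ i, (c i * m i + b i)) (∑ i, .mk (c i ^ 2) (sq_nonneg (c i)) * v i) := by
  have hmap : (fun x : ι → ℝ ↦ ∑ i, (c i * x i + b i))
      = (fun y ↦ ∑ i, y i) ∘ (fun x i ↦ c i * x i + b i) := rfl
  rw [hmap, ← Measure.map_map (by fun_prop) (by fun_prop),
    Measure.pi_map_pi (f := fun i t ↦ c i * t + b i) fun i ↦ by fun_prop]
  simp only [gaussianReal_map_affine]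
  exact map_sum_pi_gaussianReal _ _

lemma gaussianReal_Ioi (m : ℝ) {v : ℝ≥0} (hv : v ≠ 0) (b : ℝ) :
    gaussianReal m v (Ioi b) = gaussianReal 0 1 (Ioi ((b - m) / √v)) := by
  have hs : 0 < √(v : ℝ) := sqrt_pos.2 (by positivity)
  have hstd : gaussianReal m v = (gaussianReal 0 1).map (fun t ↦ √v * t + m) := by
    rw [gaussianReal_map_affine, mul_zero, zero_add]
    congr 1
    ext
    simp [sq_sqrt v.coe_nonneg]
  rw [hstd, Measure.map_apply (by fun_prop) measurableSet_Ioi]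
  congr 1
  ext t
  simp [div_lt_iff₀' hs, sub_lt_iff_lt_add]

lemma gaussianReal_zero_one_Ioi (x : ℝ) :
    gaussianReal 0 1 (Ioi x)
      = ENNReal.ofReal ((1 / √(2 * π)) * ∫ u in Ioi x, exp (-u ^ 2 / 2)) := by
  rw [gaussianReal_apply_eq_integral _ one_ne_zero, ← integral_const_mul]
  simp [gaussianPDFReal]

section PrivacyLoss

variable {ι : Type*} [Fintype ι] (m m' : ι → ℝ)

/-- The log-density of `⨂ i, N(m i, σ²)` with respect to `⨂ i, N(m' i, σ²)`. -/
noncomputable def gaussianPrivacyLoss (σ : ℝ) (x : ι → ℝ) : ℝ :=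
  ∑ i, (m i - m' i) * (2 * x i - m i - m' i) / (2 * σ ^ 2)

variable {σ : ℝ}

lemma measurable_gaussianPrivacyLoss : Measurable (gaussianPrivacyLoss m m' σ) := by
  unfold gaussianPrivacyLoss
  fun_prop

lemma pi_gaussianReal_eq_withDensity_exp_gaussianPrivacyLoss (hσ : σ ≠ 0) :
    Measure.pi (fun i ↦ gaussianReal (m i) (σ ^ 2).toNNReal)
      = (Measure.pi fun i ↦ gaussianReal (m' i) (σ ^ 2).toNNReal).withDensity
          (fun x ↦ ENNReal.ofReal (exp (gaussianPrivacyLoss m m' σ x))) := by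
  have hv : (σ ^ 2).toNNReal ≠ 0 := by simp [hσ]
  simp_rw [fun i ↦ gaussianReal_eq_withDensity_exp (m i) (m' i) hv,
    Real.coe_toNNReal _ (sq_nonneg σ)]
  rw [Measure.pi_withDensity _ fun i ↦ by fun_prop]
  congr 1
  ext x
  rw [gaussianPrivacyLoss, exp_sum, ENNReal.ofReal_prod_of_nonneg fun i _ ↦ (exp_pos _).le]

lemma map_gaussianPrivacyLoss_pi_gaussianReal (hσ : σ ≠ 0) :
    (Measure.pi fun i ↦ gaussianReal (m i) (σ ^ 2).toNNReal).map (gaussianPrivacyLoss m m' σ)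
      = gaussianReal ((∑ i, (m i - m' i) ^ 2) / (2 * σ ^ 2))
          ((∑ i, (m i - m' i) ^ 2) / σ ^ 2).toNNReal := by
  have hloss : gaussianPrivacyLoss m m' σ = fun x ↦ ∑ i, ((m i - m' i) / σ ^ 2 * x i
      + -((m i - m' i) * (m i + m' i) / (2 * σ ^ 2))) := by
    ext x
    refine Finset.sum_congr rfl fun i _ ↦ ?_
    field_simp
    ring
  rw [hloss, map_sum_affine_pi_gaussianReal]
  congr 1
  · rw [Finset.sum_div]
    refine Finset.sum_congr rfl fun i _ ↦ ?_
    field_simp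
    ring
  · ext
    rw [Real.coe_toNNReal _ (by positivity), NNReal.coe_sum, Finset.sum_div]
    refine Finset.sum_congr rfl fun i _ ↦ ?_
    simp only [NNReal.coe_mul, NNReal.coe_mk, Real.coe_toNNReal _ (sq_nonneg σ)]
    field_simp

lemma pi_gaussianReal_gaussianPrivacyLoss_gt_le (hσ : 0 < σ) {ε t : ℝ} (hε : 0 < ε)
    (ht : t * √(∑ i, (m i - m' i) ^ 2) * σ ≤ ε * σ ^ 2 - (∑ i, (m i - m' i) ^ 2) / 2) :
    Measure.pi (fun i ↦ gaussianReal (m i) (σ ^ 2).toNNReal)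
        (gaussianPrivacyLoss m m' σ ⁻¹' Ioi ε) ≤ gaussianReal 0 1 (Ioi t) := by
  set A := ∑ i, (m i - m' i) ^ 2
  rw [← Measure.map_apply (measurable_gaussianPrivacyLoss m m') measurableSet_Ioi,
    map_gaussianPrivacyLoss_pi_gaussianReal m m' hσ.ne']
  rcases (Finset.sum_nonneg fun i _ ↦ sq_nonneg (m i - m' i)).eq_or_lt with hA | hA
  · rw [← hA]
    simp [gaussianReal_zero_var, hε.not_gt]
  rw [gaussianReal_Ioi _ (by simp; positivity)]
  refine measure_mono (Ioi_subset_Ioi ?_)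
  rw [Real.coe_toNNReal _ (by positivity), sqrt_div' _ (sq_nonneg σ), sqrt_sq hσ.le,
    le_div_iff₀ (by positivity)]
  field_simp
  linarith

end PrivacyLoss

end ProbabilityTheory

lemma two_mul_mul_sq_eq {ε : ℝ} (hε : 0 < ε) (μ : ℝ) :
    2 * ε * ((μ + √(μ ^ 2 + 2 * ε)) / (2 * ε)) ^ 2
      = 2 * μ * ((μ + √(μ ^ 2 + 2 * ε)) / (2 * ε)) + 1 := by
  have hsq := sq_sqrt (by positivity : 0 ≤ μ ^ 2 + 2 * ε)
  field_simp
  linear_combination hsq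

lemma mul_le_of_two_mul_mul_sq_eq {ε μ κ Δ a : ℝ} (hμ : 0 ≤ μ) (hκ : 0 < κ)
    (hκ_eq : 2 * ε * κ ^ 2 = 2 * μ * κ + 1) (ha : 0 ≤ a) (haΔ : a ≤ Δ) :
    μ * a * (κ * Δ) ≤ ε * (κ * Δ) ^ 2 - a ^ 2 / 2 := by
  have hΔ : 0 ≤ Δ := ha.trans haΔ
  nlinarith [mul_le_mul_of_nonneg_left haΔ (mul_nonneg (mul_nonneg hμ hκ.le) hΔ),
    mul_le_mul haΔ haΔ ha hΔ]

theorem stmt_0_general (ε δ : ℝ) (hε : 0 < ε)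
    (μ : ℝ) (hμ : 0 ≤ μ)
    (hQ : (1 / Real.sqrt (2 * Real.pi)) * ∫ u in Set.Ioi μ, Real.exp (-u ^ 2 / 2) = δ)
    (κ : ℝ) (hκ : κ = (μ + Real.sqrt (μ ^ 2 + 2 * ε)) / (2 * ε))
    (k : ℕ)
    (m m' : EuclideanSpace ℝ (Fin k)) (Δ : ℝ) (hΔ : 0 < Δ)
    (hadj : ‖m - m'‖ ≤ Δ)
    (σ : ℝ) (hσ : σ = κ * Δ)
    (S : Set (Fin k → ℝ)) (hS : MeasurableSet S) :
    (Measure.pi fun i => gaussianReal (m i) (Real.toNNReal (σ ^ 2))) S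
      ≤ ENNReal.ofReal (Real.exp ε)
          * (Measure.pi fun i => gaussianReal (m' i) (Real.toNNReal (σ ^ 2))) S
        + ENNReal.ofReal δ := by
  have hκ_pos : 0 < κ := hκ ▸ by positivity
  have hσ_pos : 0 < σ := hσ ▸ by positivity
  set L := gaussianPrivacyLoss (fun i ↦ m i) (fun i ↦ m' i) σ
  have hdist : ∑ i, (m i - m' i) ^ 2 = ‖m - m'‖ ^ 2 := by
    simp [EuclideanSpace.norm_sq_eq]
  calc _ ≤ (Measure.pi fun i ↦ gaussianReal (m i) (σ ^ 2).toNNReal) (S ∩ L ⁻¹' Iic ε)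
        + (Measure.pi fun i ↦ gaussianReal (m i) (σ ^ 2).toNNReal) (L ⁻¹' Ioi ε) := by
        refine (measure_le_inter_add_sdiff _ S _).trans (add_le_add_right (measure_mono ?_) _)
        intro x hx
        simpa using hx.2
    _ ≤ _ := by
      gcongr ?_ + ?_
      · rw [pi_gaussianReal_eq_withDensity_exp_gaussianPrivacyLoss _ (fun i ↦ m' i) hσ_pos.ne']
        exact withDensity_inter_le_mul _ hS (measurable_gaussianPrivacyLoss _ _ measurableSet_Iic)
          fun x hx ↦ ENNReal.ofReal_le_ofReal (exp_le_exp.2 hx)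
      · rw [← hQ, ← gaussianReal_zero_one_Ioi]
        refine pi_gaussianReal_gaussianPrivacyLoss_gt_le _ _ hσ_pos hε ?_
        rw [hdist, sqrt_sq (norm_nonneg _), hσ]
        exact mul_le_of_two_mul_mul_sq_eq hμ hκ_pos (hκ ▸ two_mul_mul_sq_eq hε μ)
          (norm_nonneg _) hadj

/-- **Gaussian mechanism for (ε,δ)-differential privacy.**
If `Q(μ) = δ` with `Q` the Gaussian tail function, `κ = (μ + √(μ² + 2ε))/(2ε)`,
`‖m − m'‖₂ ≤ Δ` and `σ = κΔ`, then the product Gaussian measures with means `m, m'`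
and common variance `σ²` satisfy `ν S ≤ e^ε ν' S + δ` for every Borel set `S`. -/
theorem stmt_0 (ε δ : ℝ) (hε : 0 < ε) (hδ : δ ∈ Set.Ioo (0 : ℝ) 1)
    (μ : ℝ) (hμ : 0 ≤ μ)
    (hQ : (1 / Real.sqrt (2 * Real.pi)) * ∫ u in Set.Ioi μ, Real.exp (-u ^ 2 / 2) = δ)
    (κ : ℝ) (hκ : κ = (μ + Real.sqrt (μ ^ 2 + 2 * ε)) / (2 * ε))
    (k : ℕ) (hk : 0 < k)
    (m m' : EuclideanSpace ℝ (Fin k)) (Δ : ℝ) (hΔ : 0 < Δ)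
    (hadj : ‖m - m'‖ ≤ Δ)
    (σ : ℝ) (hσ : σ = κ * Δ)
    (S : Set (Fin k → ℝ)) (hS : MeasurableSet S) :
    (Measure.pi fun i => gaussianReal (m i) (Real.toNNReal (σ ^ 2))) S
      ≤ ENNReal.ofReal (Real.exp ε)
          * (Measure.pi fun i => gaussianReal (m' i) (Real.toNNReal (σ ^ 2))) S
        + ENNReal.ofReal δ :=
  stmt_0_general ε δ hε μ hμ hQ κ hκ k m m' Δ hΔ hadj σ hσ S hS
end

section
/- (Lemma 1 of the paper.) Fix n ≥ 1, positive integers p_1,…,p_n with p = p_1 + ⋯ + p_n, reals ρ_1,…,ρ_n > 0, κ > 0, a block-diagonal symmetric positive definite p × p matrix V = diag(V_1,…,V_n) with V_i of size p_i × p_i, a horizon T ≥ 0, matrices A_t (m × m), C_t (p × m), L_t (r × m), symmetric positive definite matrices W_t (m × m) and Σ̄_0 (m × m). For a nonzero real q × p matrix D with column blocks D_i ∈ ℝ^{q×p_i}, define Δ₂D = max_i ρ_i‖D_i‖₂, Π(D) = V⁻¹ − V⁻¹(V⁻¹ + DᵀD/(κ Δ₂D)²)⁻¹V⁻¹, and the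 covariance recursion Σ_0(D) = (Σ̄_0⁻¹ + C_0ᵀ Π(D) C_0)⁻¹, Σ_{t+1}(D) = ((A_t Σ_t(D) A_tᵀ + W_t)⁻¹ + C_{t+1}ᵀ Π(D) C_{t+1})⁻¹ for 0 ≤ t ≤ T−1. Then for every nonzero D there exists a nonzero real matrix D̃ with column blocks D̃_i satisfying ρ_i‖D̃_i‖₂ = Δ₂D̃ = Δ₂D for all 1 ≤ i ≤ n, such that Σ_t(D̃) ⪯ Σ_t(D) for all 0 ≤ t ≤ T, and hence Σ_{t=0}^{T} Tr(L_t Σ_t(D̃) L_tᵀ) ≤ Σ_{t=0}^{T} Tr(L_t Σ_t(D) L_tᵀ). -/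
open Matrix

/-- The induced 2-norm (largest singular value) of a real matrix. -/
noncomputable def sNorm {m n : Type*} [Fintype m] [Fintype n] [DecidableEq n]
    (M : Matrix m n ℝ) : ℝ :=
  ‖LinearMap.toContinuousLinearMap (Matrix.toEuclideanLin M)‖

/-- The `i`-th column block of a matrix with columns indexed by `(i : Fin n) × Fin (p i)`. -/
def blk {q n : ℕ} {p : Fin n → ℕ} (D : Matrix (Fin q) ((i : Fin n) × Fin (p i)) ℝ)
    (i : Fin n) : Matrix (Fin q) (Fin (p i)) ℝ :=
  Matrix.of fun r j => D r ⟨i, j⟩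

/-- The ℓ₂-sensitivity `Δ₂D = max_i ρ_i ‖D_i‖₂` of a block matrix `D`. -/
noncomputable def Delta2 {q n : ℕ} {p : Fin n → ℕ} (ρ : Fin n → ℝ)
    (D : Matrix (Fin q) ((i : Fin n) × Fin (p i)) ℝ) : ℝ :=
  ⨆ i : Fin n, ρ i * sNorm (blk D i)

/-- The signal-to-noise matrix
`Π(D) = V⁻¹ − V⁻¹ (V⁻¹ + DᵀD/(κ Δ₂D)²)⁻¹ V⁻¹`. -/
noncomputable def PiOf {q n : ℕ} {p : Fin n → ℕ}
    (V : Matrix ((i : Fin n) × Fin (p i)) ((i : Fin n) × Fin (p i)) ℝ)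
    (κ : ℝ) (ρ : Fin n → ℝ)
    (D : Matrix (Fin q) ((i : Fin n) × Fin (p i)) ℝ) :
    Matrix ((i : Fin n) × Fin (p i)) ((i : Fin n) × Fin (p i)) ℝ :=
  V⁻¹ - V⁻¹ * (V⁻¹ + ((κ * Delta2 ρ D) ^ 2)⁻¹ • (Dᵀ * D))⁻¹ * V⁻¹

/-- The Kalman filter error covariance recursion
`Σ₀ = (Σ̄₀⁻¹ + C₀ᵀ Π C₀)⁻¹`, `Σ_{t+1} = ((A_t Σ_t A_tᵀ + W_t)⁻¹ + C_{t+1}ᵀ Π C_{t+1})⁻¹`. -/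
noncomputable def SigSeq {m : ℕ} {P : Type*} [Fintype P] [DecidableEq P]
    (A W : ℕ → Matrix (Fin m) (Fin m) ℝ) (C : ℕ → Matrix P (Fin m) ℝ)
    (Sbar0 : Matrix (Fin m) (Fin m) ℝ) (Pi : Matrix P P ℝ) :
    ℕ → Matrix (Fin m) (Fin m) ℝ
  | 0 => (Sbar0⁻¹ + (C 0)ᵀ * Pi * C 0)⁻¹
  | t + 1 => ((A t * SigSeq A W C Sbar0 Pi t * (A t)ᵀ + W t)⁻¹
      + (C (t + 1))ᵀ * Pi * C (t + 1))⁻¹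

/-!
Append to `D` one row per block `i`, equal to `β_i` on the columns of block `i` and `0` elsewhere.
This adds a positive semidefinite matrix to `DᵀD`, and by the intermediate value theorem each `β_i`
can be chosen so that block `i` attains `ρ_i ‖D̃_i‖₂ = Δ₂D`; hence `Δ₂D̃ = Δ₂D` and the noise level
is unchanged. Since matrix inversion is antitone on positive definite matrices,
`N ↦ P - P (P + N)⁻¹ P` is monotone, so `Π(D) ⪯ Π(D̃)`; the same antitonicity, applied at every
step of the Riccati recursion, gives `Σ_t(D̃) ⪯ Σ_t(D)`, and conjugation by `L_t` followed by the
trace preserves this order.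
-/

open scoped MatrixOrder

section SpectralNorm

open scoped Matrix.Norms.L2Operator

-- `sNorm M` is by definition `‖M‖` for the `Matrix.Norms.L2Operator` norm.

variable {ι ι' κ : Type*} [Fintype ι] [Fintype ι'] [Fintype κ] [DecidableEq κ]

theorem sNorm_nonneg (M : Matrix ι κ ℝ) : 0 ≤ sNorm M := norm_nonneg _

theorem continuous_sNorm : Continuous (sNorm : Matrix ι κ ℝ → ℝ) := continuous_norm

theorem sNorm_eq_of_transpose_mul_self_eq {M : Matrix ι κ ℝ} {N : Matrix ι' κ ℝ}
    (h : Mᵀ * M = Nᵀ * N) : sNorm M = sNorm N := by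
  have hsq : ‖M‖ * ‖M‖ = ‖N‖ * ‖N‖ := by
    rw [← l2_opNorm_conjTranspose_mul_self, ← l2_opNorm_conjTranspose_mul_self,
      conjTranspose_eq_transpose_of_trivial, conjTranspose_eq_transpose_of_trivial, h]
  exact (mul_self_inj (norm_nonneg _) (norm_nonneg _)).mp hsq

theorem abs_apply_le_sNorm (M : Matrix ι κ ℝ) (i : ι) (j : κ) : |M i j| ≤ sNorm M := by
  have hcol := l2_opNorm_mulVec M (EuclideanSpace.single j 1)
  rw [PiLp.norm_single, norm_one, mul_one] at hcol
  refine le_trans (le_of_eq ?_) ((PiLp.norm_apply_le _ i).trans hcol)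
  simp [EuclideanSpace.equiv]

end SpectralNorm

section StackedRows

variable {ι ι' κ : Type*}

theorem continuous_fromRows_smul (M : Matrix ι κ ℝ) (R : Matrix ι' κ ℝ) :
    Continuous fun β : ℝ => fromRows M (β • R) := by
  refine continuous_pi fun r => continuous_pi fun k => ?_
  cases r <;>
    simp only [fromRows_apply_inl, fromRows_apply_inr, Matrix.smul_apply, smul_eq_mul] <;>
    fun_prop

variable [Fintype ι] [Fintype ι']

theorem transpose_mul_self_fromRows (M : Matrix ι κ ℝ) (N : Matrix ι' κ ℝ) :
    (fromRows M N)ᵀ * fromRows M N = Mᵀ * M + Nᵀ * N := by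
  rw [transpose_fromRows, fromCols_mul_fromRows]

variable [Fintype κ] [DecidableEq κ]

/-- Intermediate value theorem: `β ↦ ‖[M; β R]‖₂` is continuous, equals `‖M‖₂` at `β = 0`, and
is at least `|β| |R r k|` for every entry `R r k`. -/
theorem exists_sNorm_fromRows_smul_eq (M : Matrix ι κ ℝ) {R : Matrix ι' κ ℝ} (hR : R ≠ 0)
    {s : ℝ} (hs : sNorm M ≤ s) : ∃ β : ℝ, sNorm (fromRows M (β • R)) = s := by
  obtain ⟨r, k, hrk⟩ : ∃ r k, R r k ≠ 0 := by
    by_contra! h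
    exact hR (ext h)
  have hs₀ : 0 ≤ s := (sNorm_nonneg M).trans hs
  have hstart : sNorm (fromRows M ((0 : ℝ) • R)) = sNorm M :=
    sNorm_eq_of_transpose_mul_self_eq (by simp [transpose_mul_self_fromRows])
  have hend : s ≤ sNorm (fromRows M ((s / |R r k|) • R)) := by
    have := abs_apply_le_sNorm (fromRows M ((s / |R r k|) • R)) (Sum.inr r) k
    rwa [fromRows_apply_inr, Matrix.smul_apply, smul_eq_mul, abs_mul, abs_div, abs_of_nonneg hs₀,
      abs_abs, div_mul_cancel₀ _ (abs_ne_zero.mpr hrk)] at this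
  obtain ⟨β, -, hβ⟩ := intermediate_value_Icc (div_nonneg hs₀ (abs_nonneg _))
    (continuous_sNorm.comp (continuous_fromRows_smul M R)).continuousOn
    ⟨hstart.trans_le hs, hend⟩
  exact ⟨β, hβ⟩

end StackedRows

section Loewner

variable {ι κ : Type*} {A B : Matrix ι ι ℝ}

theorem Matrix.PosDef.of_le (hA : A.PosDef) (h : A ≤ B) : B.PosDef := by
  simpa using hA.add_posSemidef h

variable [Fintype ι] [Fintype κ]

theorem Matrix.transpose_mul_mul_le_transpose_mul_mul (h : A ≤ B) (M : Matrix ι κ ℝ) :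
    Mᵀ * A * M ≤ Mᵀ * B * M := by
  rw [le_iff, ← Matrix.sub_mul, ← Matrix.mul_sub]
  exact h.conjTranspose_mul_mul_same M

theorem Matrix.mul_mul_transpose_le_mul_mul_transpose (h : A ≤ B) (M : Matrix κ ι ℝ) :
    M * A * Mᵀ ≤ M * B * Mᵀ := by
  rw [le_iff, ← Matrix.sub_mul, ← Matrix.mul_sub]
  exact h.mul_mul_conjTranspose_same M

theorem Matrix.trace_mul_mul_transpose_le (h : A ≤ B) (M : Matrix κ ι ℝ) :
    (M * A * Mᵀ).trace ≤ (M * B * Mᵀ).trace := by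
  rw [← sub_nonneg, ← trace_sub]
  exact PosSemidef.trace_nonneg (mul_mul_transpose_le_mul_mul_transpose h M)

theorem Matrix.PosSemidef.mul_mul_transpose_add_posDef (hA : A.PosSemidef) (hB : B.PosDef)
    (M : Matrix ι ι ℝ) : (M * A * Mᵀ + B).PosDef :=
  PosDef.posSemidef_add (hA.mul_mul_conjTranspose_same M) hB

variable [DecidableEq ι]

/-- Both Schur complements of the block matrix `[A⁻¹, 1; 1, B]` are positive semidefinite iff
it is, and they are `B - A` and `A⁻¹ - B⁻¹`. -/
theorem Matrix.PosDef.inv_le_inv_of_le (hA : A.PosDef) (h : A ≤ B) : B⁻¹ ≤ A⁻¹ := by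
  have hB := hA.of_le h
  have hA' := hA.inv
  let _ := hA.isUnit.invertible
  let _ := hA'.isUnit.invertible
  let _ := hB.isUnit.invertible
  have hblocks : (fromBlocks A⁻¹ 1 1ᴴ B).PosSemidef := by
    rw [hA'.fromBlocks₁₁, conjTranspose_one, one_mul, mul_one, inv_inv_of_invertible]
    exact h
  rwa [hB.fromBlocks₂₂, conjTranspose_one, one_mul, mul_one] at hblocks

theorem Matrix.sub_mul_inv_add_mul_mono {P N N' : Matrix ι ι ℝ} (hP : P.PosDef) (hN : 0 ≤ N)
    (h : N ≤ N') : P - P * (P + N)⁻¹ * P ≤ P - P * (P + N')⁻¹ * P := by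
  have hinv : (P + N')⁻¹ ≤ (P + N)⁻¹ :=
    (hP.add_posSemidef hN.posSemidef).inv_le_inv_of_le (add_le_add_right h P)
  have hconj := mul_mul_transpose_le_mul_mul_transpose hinv P
  rw [(isHermitian_iff_isSymm.mp hP.isHermitian).eq] at hconj
  exact sub_le_sub_left hconj P

theorem Matrix.sub_mul_inv_add_mul_nonneg {P N : Matrix ι ι ℝ} (hP : P.PosDef) (hN : 0 ≤ N) :
    0 ≤ P - P * (P + N)⁻¹ * P := by
  have := sub_mul_inv_add_mul_mono hP le_rfl hN
  rwa [add_zero, mul_nonsing_inv _ hP.det_pos.ne'.isUnit, one_mul, sub_self] at this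

theorem Matrix.PosDef.inv_inv_add_transpose_mul_mul_le {P : Type*} [Fintype P]
    {Y Y' : Matrix ι ι ℝ} {Q Q' : Matrix P P ℝ} (hY' : Y'.PosDef) (hY : Y' ≤ Y) (hQ : 0 ≤ Q)
    (hQQ : Q ≤ Q') (M : Matrix P ι ℝ) : (Y'⁻¹ + Mᵀ * Q' * M)⁻¹ ≤ (Y⁻¹ + Mᵀ * Q * M)⁻¹ := by
  have hZ : (Y⁻¹ + Mᵀ * Q * M).PosDef :=
    (hY'.of_le hY).inv.add_posSemidef (hQ.posSemidef.conjTranspose_mul_mul_same M)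
  exact hZ.inv_le_inv_of_le
    (add_le_add (hY'.inv_le_inv_of_le hY) (transpose_mul_mul_le_transpose_mul_mul hQQ M))

end Loewner

section KalmanRecursion

variable {m : ℕ} {P : Type*} [Fintype P] [DecidableEq P] {A W : ℕ → Matrix (Fin m) (Fin m) ℝ}
  {C : ℕ → Matrix P (Fin m) ℝ} {Sbar0 : Matrix (Fin m) (Fin m) ℝ} {Pi Pi' : Matrix P P ℝ}

theorem sigSeq_posDef (hW : ∀ t, (W t).PosDef) (hS : Sbar0.PosDef) (hPi : 0 ≤ Pi) :
    ∀ t, (SigSeq A W C Sbar0 Pi t).PosDef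
  | 0 => (hS.inv.add_posSemidef (hPi.posSemidef.conjTranspose_mul_mul_same (C 0))).inv
  | t + 1 =>
    have hprior := (sigSeq_posDef hW hS hPi t).posSemidef.mul_mul_transpose_add_posDef (hW t) (A t)
    (hprior.inv.add_posSemidef (hPi.posSemidef.conjTranspose_mul_mul_same (C (t + 1)))).inv

theorem sigSeq_antitone (hW : ∀ t, (W t).PosDef) (hS : Sbar0.PosDef) (hPi : 0 ≤ Pi)
    (h : Pi ≤ Pi') : ∀ t, SigSeq A W C Sbar0 Pi' t ≤ SigSeq A W C Sbar0 Pi t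
  | 0 => hS.inv_inv_add_transpose_mul_mul_le le_rfl hPi h (C 0)
  | t + 1 => by
    have hprior := (sigSeq_posDef (A := A) (C := C) hW hS (hPi.trans h) t).posSemidef
      |>.mul_mul_transpose_add_posDef (hW t) (A t)
    have hpredict := add_le_add_left
      (mul_mul_transpose_le_mul_mul_transpose (sigSeq_antitone hW hS hPi h t) (A t)) (W t)
    exact hprior.inv_inv_add_transpose_mul_mul_le hpredict hPi h (C (t + 1))

end KalmanRecursion

section BlockDiagonal

open scoped ComplexOrder

variable {𝕜 o : Type*} [RCLike 𝕜] [Fintype o] [DecidableEq o] {d : o → Type*}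
  [∀ i, Fintype (d i)]

theorem Matrix.dotProduct_blockDiagonal'_mulVec (M : ∀ i, Matrix (d i) (d i) 𝕜)
    (x y : (i : o) × d i → 𝕜) :
    x ⬝ᵥ blockDiagonal' M *ᵥ y = ∑ i, (fun k => x ⟨i, k⟩) ⬝ᵥ M i *ᵥ fun k => y ⟨i, k⟩ := by
  simp only [dotProduct, mulVec, Fintype.sum_sigma]
  refine Finset.sum_congr rfl fun i _ => Finset.sum_congr rfl fun k _ => congrArg _ ?_
  rw [Finset.sum_eq_single i (fun j _ hj => Finset.sum_eq_zero fun l _ => by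
    rw [blockDiagonal'_apply_ne _ _ _ (Ne.symm hj), zero_mul]) (by simp)]
  simp [blockDiagonal'_apply_eq]

theorem Matrix.PosDef.blockDiagonal' {M : ∀ i, Matrix (d i) (d i) 𝕜} (hM : ∀ i, (M i).PosDef) :
    (blockDiagonal' M).PosDef := by
  rw [posDef_iff_dotProduct_mulVec]
  refine ⟨isHermitian_blockDiagonal'_iff.mpr fun i => (hM i).isHermitian, fun x hx => ?_⟩
  obtain ⟨⟨i, k⟩, hik⟩ : ∃ j, x j ≠ 0 := by
    by_contra! h
    exact hx (funext h)
  rw [dotProduct_blockDiagonal'_mulVec]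
  refine Finset.sum_pos' (fun j _ => (hM j).posSemidef.dotProduct_mulVec_nonneg _)
    ⟨i, Finset.mem_univ _, (hM i).dotProduct_mulVec_pos fun h => hik (congrFun h k)⟩

end BlockDiagonal

section Sensitivity

variable {q n : ℕ} {p : Fin n → ℕ} {ρ : Fin n → ℝ}

theorem transpose_mul_self_blk (D : Matrix (Fin q) ((i : Fin n) × Fin (p i)) ℝ) (i : Fin n) :
    (blk D i)ᵀ * blk D i = (Dᵀ * D).submatrix (Sigma.mk i) (Sigma.mk i) := by
  ext j k
  simp [blk, mul_apply]

theorem mul_sNorm_blk_le_delta2 (ρ : Fin n → ℝ)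
    (D : Matrix (Fin q) ((i : Fin n) × Fin (p i)) ℝ) (i : Fin n) :
    ρ i * sNorm (blk D i) ≤ Delta2 ρ D :=
  le_ciSup (f := fun i => ρ i * sNorm (blk D i)) (Set.finite_range _).bddAbove i

theorem delta2_eq_of_forall [Nonempty (Fin n)]
    {D : Matrix (Fin q) ((i : Fin n) × Fin (p i)) ℝ} {c : ℝ}
    (h : ∀ i, ρ i * sNorm (blk D i) = c) : Delta2 ρ D = c := by
  simp only [Delta2, h, ciSup_const]

end Sensitivity

section SignalToNoise

variable {q q' n : ℕ} {p : Fin n → ℕ} {κ : ℝ} {ρ : Fin n → ℝ}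
  {V : Matrix ((i : Fin n) × Fin (p i)) ((i : Fin n) × Fin (p i)) ℝ}

theorem piOf_nonneg (hV : V.PosDef) (D : Matrix (Fin q) ((i : Fin n) × Fin (p i)) ℝ) :
    0 ≤ PiOf V κ ρ D :=
  sub_mul_inv_add_mul_nonneg hV.inv
    ((posSemidef_conjTranspose_mul_self D).smul (by positivity)).nonneg

theorem piOf_mono (hV : V.PosDef) {D : Matrix (Fin q) ((i : Fin n) × Fin (p i)) ℝ}
    {D' : Matrix (Fin q') ((i : Fin n) × Fin (p i)) ℝ} (hΔ : Delta2 ρ D = Delta2 ρ D')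
    (h : Dᵀ * D ≤ D'ᵀ * D') : PiOf V κ ρ D ≤ PiOf V κ ρ D' := by
  have hc : (0 : ℝ) ≤ ((κ * Delta2 ρ D) ^ 2)⁻¹ := by positivity
  unfold PiOf
  rw [← hΔ]
  refine sub_mul_inv_add_mul_mono hV.inv ((posSemidef_conjTranspose_mul_self D).smul hc).nonneg ?_
  rw [le_iff, ← smul_sub]
  exact PosSemidef.smul h hc

end SignalToNoise

section Saturation

variable {q n : ℕ} {p : Fin n → ℕ} {ρ : Fin n → ℝ}

theorem exists_saturating_augmentation (hp : ∀ i, 0 < p i) (hρ : ∀ i, 0 < ρ i)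
    {D : Matrix (Fin q) ((i : Fin n) × Fin (p i)) ℝ} (hD : D ≠ 0) :
    ∃ (q' : ℕ) (D' : Matrix (Fin q') ((i : Fin n) × Fin (p i)) ℝ), D' ≠ 0 ∧ Dᵀ * D ≤ D'ᵀ * D' ∧
      (∀ i, ρ i * sNorm (blk D' i) = Delta2 ρ D') ∧ Delta2 ρ D' = Delta2 ρ D := by
  obtain ⟨-, ⟨i₀, -⟩, -⟩ : ∃ r j, D r j ≠ 0 := by
    by_contra! h
    exact hD (ext h)
  have : Nonempty (Fin n) := ⟨i₀⟩
  set Δ := Delta2 ρ D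
  let R : ∀ i, Matrix (Fin n) (Fin (p i)) ℝ := fun i => of fun r _ => if r = i then 1 else 0
  have hR : ∀ i, R i ≠ 0 := fun i h => by simpa [R] using congrFun (congrFun h i) ⟨0, hp i⟩
  have hle : ∀ i, sNorm (blk D i) ≤ Δ / ρ i := fun i =>
    (le_div_iff₀' (hρ i)).mpr (mul_sNorm_blk_le_delta2 ρ D i)
  choose β hβ using fun i => exists_sNorm_fromRows_smul_eq (blk D i) (hR i) (hle i)
  let F : Matrix (Fin n) ((i : Fin n) × Fin (p i)) ℝ := of fun r j => β j.1 * R j.1 r j.2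
  let D' := (fromRows D F).submatrix finSumFinEquiv.symm id
  have hgram : D'ᵀ * D' = Dᵀ * D + Fᵀ * F := by
    rw [transpose_submatrix, submatrix_mul_equiv, submatrix_id_id, transpose_mul_self_fromRows]
  have hsat : ∀ i, ρ i * sNorm (blk D' i) = Δ := fun i => by
    have hFi : β i • R i = blk F i := by
      ext r k
      simp [F, blk]
    have hblk : sNorm (blk D' i) = sNorm (fromRows (blk D i) (β i • R i)) := by
      apply sNorm_eq_of_transpose_mul_self_eq
      rw [transpose_mul_self_fromRows, hFi, transpose_mul_self_blk, transpose_mul_self_blk,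
        transpose_mul_self_blk, hgram]
      rfl
    rw [hblk, hβ, mul_div_cancel₀ _ (hρ i).ne']
  have hΔ : Delta2 ρ D' = Δ := delta2_eq_of_forall hsat
  refine ⟨q + n, D', fun h => hD ?_, ?_, hΔ ▸ hsat, hΔ⟩
  · ext r j
    simpa [D'] using congrFun (congrFun h (Fin.castAdd n r)) j
  · rw [hgram]
    exact le_add_of_nonneg_right (posSemidef_conjTranspose_mul_self F).nonneg

end Saturation

theorem stmt_7_general {n m r : ℕ} (p : Fin n → ℕ) (hp : ∀ i, 0 < p i)
    (ρ : Fin n → ℝ) (hρ : ∀ i, 0 < ρ i) (κ : ℝ)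
    (Vb : ∀ i : Fin n, Matrix (Fin (p i)) (Fin (p i)) ℝ)
    (hVb : ∀ i, (Vb i).PosDef)
    (V : Matrix ((i : Fin n) × Fin (p i)) ((i : Fin n) × Fin (p i)) ℝ)
    (hV : V = Matrix.blockDiagonal' Vb)
    (T : ℕ)
    (A : ℕ → Matrix (Fin m) (Fin m) ℝ)
    (C : ℕ → Matrix ((i : Fin n) × Fin (p i)) (Fin m) ℝ)
    (L : ℕ → Matrix (Fin r) (Fin m) ℝ)
    (W : ℕ → Matrix (Fin m) (Fin m) ℝ) (hW : ∀ t, (W t).PosDef)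
    (Sbar0 : Matrix (Fin m) (Fin m) ℝ) (hSbar0 : Sbar0.PosDef)
    (q : ℕ) (D : Matrix (Fin q) ((i : Fin n) × Fin (p i)) ℝ) (hD : D ≠ 0) :
    ∃ (q' : ℕ) (D' : Matrix (Fin q') ((i : Fin n) × Fin (p i)) ℝ),
      D' ≠ 0 ∧
      (∀ i : Fin n, ρ i * sNorm (blk D' i) = Delta2 ρ D') ∧
      Delta2 ρ D' = Delta2 ρ D ∧
      (∀ t ≤ T,
        (SigSeq A W C Sbar0 (PiOf V κ ρ D) t
          - SigSeq A W C Sbar0 (PiOf V κ ρ D') t).PosSemidef) ∧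
      ∑ t ∈ Finset.range (T + 1),
          (L t * SigSeq A W C Sbar0 (PiOf V κ ρ D') t * (L t)ᵀ).trace
        ≤ ∑ t ∈ Finset.range (T + 1),
            (L t * SigSeq A W C Sbar0 (PiOf V κ ρ D) t * (L t)ᵀ).trace := by
  obtain ⟨q', D', hD', hgram, hsat, hΔ⟩ := exists_saturating_augmentation hp hρ hD
  have hVpos : V.PosDef := hV ▸ PosDef.blockDiagonal' hVb
  have hcov : ∀ t,
      SigSeq A W C Sbar0 (PiOf V κ ρ D') t ≤ SigSeq A W C Sbar0 (PiOf V κ ρ D) t :=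
    sigSeq_antitone hW hSbar0 (piOf_nonneg hVpos D) (piOf_mono hVpos hΔ.symm hgram)
  exact ⟨q', D', hD', hsat, hΔ, fun t _ => hcov t,
    Finset.sum_le_sum fun t _ => trace_mul_mul_transpose_le (hcov t) (L t)⟩

/-- **Lemma 1 of the paper.** For every nonzero `D` there is a nonzero `D̃` whose blocks
all saturate the sensitivity, `ρ_i‖D̃_i‖₂ = Δ₂D̃ = Δ₂D`, and whose Kalman error covariances
satisfy `Σ_t(D̃) ⪯ Σ_t(D)` for `0 ≤ t ≤ T`; hence the total trace cost does not increase. -/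
theorem stmt_7 {n m r : ℕ} (hn : 1 ≤ n) (p : Fin n → ℕ) (hp : ∀ i, 0 < p i)
    (ρ : Fin n → ℝ) (hρ : ∀ i, 0 < ρ i) (κ : ℝ) (hκ : 0 < κ)
    (Vb : ∀ i : Fin n, Matrix (Fin (p i)) (Fin (p i)) ℝ)
    (hVb : ∀ i, (Vb i).PosDef)
    (V : Matrix ((i : Fin n) × Fin (p i)) ((i : Fin n) × Fin (p i)) ℝ)
    (hV : V = Matrix.blockDiagonal' Vb)
    (T : ℕ)
    (A : ℕ → Matrix (Fin m) (Fin m) ℝ)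
    (C : ℕ → Matrix ((i : Fin n) × Fin (p i)) (Fin m) ℝ)
    (L : ℕ → Matrix (Fin r) (Fin m) ℝ)
    (W : ℕ → Matrix (Fin m) (Fin m) ℝ) (hW : ∀ t, (W t).PosDef)
    (Sbar0 : Matrix (Fin m) (Fin m) ℝ) (hSbar0 : Sbar0.PosDef)
    (q : ℕ) (D : Matrix (Fin q) ((i : Fin n) × Fin (p i)) ℝ) (hD : D ≠ 0) :
    ∃ (q' : ℕ) (D' : Matrix (Fin q') ((i : Fin n) × Fin (p i)) ℝ),
      D' ≠ 0 ∧
      (∀ i : Fin n, ρ i * sNorm (blk D' i) = Delta2 ρ D') ∧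
      Delta2 ρ D' = Delta2 ρ D ∧
      (∀ t ≤ T,
        (SigSeq A W C Sbar0 (PiOf V κ ρ D) t
          - SigSeq A W C Sbar0 (PiOf V κ ρ D') t).PosSemidef) ∧
      ∑ t ∈ Finset.range (T + 1),
          (L t * SigSeq A W C Sbar0 (PiOf V κ ρ D') t * (L t)ᵀ).trace
        ≤ ∑ t ∈ Finset.range (T + 1),
            (L t * SigSeq A W C Sbar0 (PiOf V κ ρ D) t * (L t)ᵀ).trace :=
  stmt_7_general p hp ρ hρ κ Vb hVb V hV T A C L W hW Sbar0 hSbar0 q D hD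
end

section
/- Let a ≠ 0, c ≠ 0 and w > 0. For s > 0, let x*(s) denote the unique positive root of c² x² + ((1 − a²)s − c²w) x − s w = 0. Then s ↦ x*(s) is strictly increasing on (0, ∞): for all 0 < s₁ < s₂ one has x*(s₁) < x*(s₂). -/
/-- **Monotonicity of the steady-state Kalman error in the measurement noise.**
If for every `s > 0`, `x s` is the (unique) positive root of
`c²x² + ((1 − a²)s − c²w)x − sw = 0`, then `s ↦ x s` is strictly increasing
on `(0, ∞)` when `a ≠ 0`. -/
theorem stmt_12 (a c w : ℝ) (ha : a ≠ 0) (hc : c ≠ 0) (hw : 0 < w)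
    (x : ℝ → ℝ)
    (hx : ∀ s : ℝ, 0 < s → 0 < x s ∧
      c ^ 2 * x s ^ 2 + ((1 - a ^ 2) * s - c ^ 2 * w) * x s - s * w = 0) :
    ∀ s₁ s₂ : ℝ, 0 < s₁ → s₁ < s₂ → x s₁ < x s₂ := by
  intro s₁ s₂ hs₁ h12
  have hs₂ : 0 < s₂ := hs₁.trans h12
  obtain ⟨hx1, he1⟩ := hx s₁ hs₁
  obtain ⟨hx2, he2⟩ := hx s₂ hs₂
  by_contra hle
  push_neg at hle
  have ha2 : 0 < a ^ 2 := by positivity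
  have hc2 : 0 < c ^ 2 := by positivity
  -- x s₁ > w
  have h1w : w < x s₁ := by
    by_contra h
    push_neg at h
    nlinarith [mul_pos ha2 (mul_pos hs₁ hx1), mul_nonneg (mul_nonneg hc2.le hx1.le) (sub_nonneg.2 h)]
  -- (1-a²) x₁ - w < 0 : from s₁ * ((1-a²)x₁ - w) = -c² x₁ (x₁ - w) < 0
  have hneg : (1 - a ^ 2) * x s₁ - w < 0 := by
    nlinarith [mul_pos (mul_pos hc2 hx1) (sub_pos.2 h1w)]
  -- f(x₁, s₂) < 0
  have hf : c ^ 2 * x s₁ ^ 2 + ((1 - a ^ 2) * s₂ - c ^ 2 * w) * x s₁ - s₂ * w < 0 := by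
    nlinarith [mul_pos (sub_pos.2 h12) (neg_pos.2 hneg)]
  -- but x₂ ≤ x₁ forces f(x₁, s₂) ≥ 0
  have hfac : s₂ * w / x s₂ = c ^ 2 * x s₂ + (1 - a ^ 2) * s₂ - c ^ 2 * w := by
    field_simp
    nlinarith [he2]
  nlinarith [mul_nonneg (sub_nonneg.2 hle) (mul_pos hc2 hx1).le, div_pos (mul_pos hs₂ hw) hx2,
    mul_nonneg (sub_nonneg.2 hle) (div_pos (mul_pos hs₂ hw) hx2).le, hfac]
end

section
/- Let a ≠ 0, c ≠ 0, w > 0, σ_v² ≥ 0, γ > 0 and integer n ≥ 2. For s > 0 let x*(s) denote the unique positive root of c² x² + ((1 − a²)s − c²w) x − s w = 0. Then the aggregated-before-noise mechanism error MSE₂ = n · x*(σ_v² + γ²/n) is strictly smaller than the input perturbation error MSE₁ = n · x*(σ_v² + γ²). -/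
/-- **Aggregation before noise beats input perturbation.** If for every `s > 0`, `x s` is
the (unique) positive root of `c²x² + ((1 − a²)s − c²w)x − sw = 0`, then for `n ≥ 2` and
`γ > 0` the error `MSE₂ = n·x(σ_v² + γ²/n)` is strictly smaller than
`MSE₁ = n·x(σ_v² + γ²)`. -/
theorem stmt_13 (a c w : ℝ) (ha : a ≠ 0) (hc : c ≠ 0) (hw : 0 < w)
    (σv2 : ℝ) (hσv2 : 0 ≤ σv2) (γ : ℝ) (hγ : 0 < γ)
    (n : ℕ) (hn : 2 ≤ n)
    (x : ℝ → ℝ)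
    (hx : ∀ s : ℝ, 0 < s → 0 < x s ∧
      c ^ 2 * x s ^ 2 + ((1 - a ^ 2) * s - c ^ 2 * w) * x s - s * w = 0) :
    (n : ℝ) * x (σv2 + γ ^ 2 / n) < (n : ℝ) * x (σv2 + γ ^ 2) := by
  have hn2 : (2:ℝ) ≤ (n:ℝ) := by exact_mod_cast hn
  have hnpos : (0:ℝ) < n := by linarith
  have hγ2 : 0 < γ ^ 2 := by positivity
  have hs1 : 0 < σv2 + γ ^ 2 / n := by positivity
  have hs2 : 0 < σv2 + γ ^ 2 := by positivity
  have hlt : σv2 + γ ^ 2 / n < σv2 + γ ^ 2 := by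
    have : γ ^ 2 / n < γ ^ 2 := by
      rw [div_lt_iff₀ hnpos]; nlinarith
    linarith
  obtain ⟨hx1, he1⟩ := hx (σv2 + γ ^ 2 / n) hs1
  obtain ⟨hx2, he2⟩ := hx (σv2 + γ ^ 2) hs2
  set s1 : ℝ := σv2 + γ ^ 2 / n
  set s2 : ℝ := σv2 + γ ^ 2
  set x1 : ℝ := x s1
  set x2 : ℝ := x s2
  have hc2 : 0 < c ^ 2 := by positivity
  have ha2 : 0 < a ^ 2 := by positivity
  -- key: (1-a²)*x1 < w
  have hkey : (1 - a ^ 2) * x1 - w < 0 := by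
    by_contra h
    push_neg at h
    have hx1w : w < x1 := by nlinarith [mul_pos ha2 hx1]
    nlinarith [mul_nonneg hs1.le h, mul_pos (mul_pos hc2 hx1) (sub_pos.mpr hx1w)]
  -- f(s2, x1) < 0
  have hf : c ^ 2 * x1 ^ 2 + ((1 - a ^ 2) * s2 - c ^ 2 * w) * x1 - s2 * w < 0 := by
    nlinarith [mul_pos (sub_pos.mpr hlt) (show 0 < w - (1 - a ^ 2) * x1 by linarith)]
  have hx12 : x1 < x2 := by
    by_contra h'
    push_neg at h'
    have hfac : 0 < c ^ 2 * (x1 + x2) + ((1 - a ^ 2) * s2 - c ^ 2 * w) := by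
      nlinarith [mul_pos hc2 (mul_pos hx1 hx2), mul_pos hs2 hw, hx2]
    nlinarith [mul_nonneg (sub_nonneg.mpr h') hfac.le]
  exact (mul_lt_mul_iff_right₀ hnpos).mpr hx12
end

section
/- Let Ω be a real symmetric positive definite p × p matrix, C a real q × p matrix, L a real r × p matrix, and η > 0. If L Ω⁻¹ Cᵀ ≠ 0, then Ω + η CᵀC is positive definite and Tr(L (Ω + η CᵀC)⁻¹ Lᵀ) < Tr(L Ω⁻¹ Lᵀ). -/
/-!
By the Woodbury identity, `(Ω + η CᵀC)⁻¹ = Ω⁻¹ - Ω⁻¹Cᵀ K⁻¹ CΩ⁻¹` with `K = η⁻¹ I + CΩ⁻¹Cᵀ ≻ 0`.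
Hence the cost drops by `Tr(M K⁻¹ Mᵀ)` where `M = LΩ⁻¹Cᵀ`, and this trace is a sum of the
quadratic forms of `K⁻¹` at the rows of `M`, one of which is positive since `M ≠ 0`.
-/

open Matrix

section Woodbury

variable {m n α : Type*} [Fintype m] [DecidableEq m] [Fintype n] [DecidableEq n] [Field α]

theorem Matrix.inv_add_smul_mul_eq_sub {A : Matrix n n α} (U : Matrix n m α) (V : Matrix m n α)
    {c : α} (hA : IsUnit A) (hc : c ≠ 0) (hK : IsUnit (c⁻¹ • 1 + V * A⁻¹ * U)) :
    (A + c • (U * V))⁻¹ = A⁻¹ - A⁻¹ * U * (c⁻¹ • 1 + V * A⁻¹ * U)⁻¹ * V * A⁻¹ := by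
  have hc_mul : (c • 1 : Matrix m m α) * (c⁻¹ • 1) = 1 := by
    rw [smul_mul_smul_comm, mul_inv_cancel₀ hc, one_mul, one_smul]
  have := add_mul_mul_inv_eq_sub A U (c • 1) V hA
    ((isUnit_iff_isUnit_det _).mpr (isUnit_det_of_right_inverse hc_mul))
    (by rwa [inv_eq_right_inv hc_mul])
  rwa [Matrix.mul_smul, Matrix.mul_one, Matrix.smul_mul, inv_eq_right_inv hc_mul] at this

end Woodbury

section TracePos

variable {m n R : Type*} [Fintype n] [Ring R] [StarRing R]

-- The double `star` puts the entry in the shape `star x ⬝ᵥ K *ᵥ x` of the quadratic form of `K`.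
theorem Matrix.mul_mul_conjTranspose_apply_self (M : Matrix m n R) (K : Matrix n n R) (i : m) :
    (M * K * Mᴴ) i i = star (star (M i)) ⬝ᵥ K *ᵥ star (M i) := by
  rw [star_star, dotProduct_mulVec, mul_apply', mul_apply_eq_vecMul]
  rfl

theorem Matrix.PosDef.trace_mul_mul_conjTranspose_pos [Fintype m] [PartialOrder R]
    [IsOrderedCancelAddMonoid R] {K : Matrix n n R} (hK : K.PosDef) {M : Matrix m n R}
    (hM : M ≠ 0) : 0 < (M * K * Mᴴ).trace := by
  obtain ⟨i, hi⟩ : ∃ i, M i ≠ 0 := by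
    by_contra! h
    exact hM (funext h)
  refine Finset.sum_pos' (fun j _ => ?_) ⟨i, Finset.mem_univ i, ?_⟩
  · rw [diag_apply, mul_mul_conjTranspose_apply_self]
    exact hK.posSemidef.dotProduct_mulVec_nonneg _
  · rw [diag_apply, mul_mul_conjTranspose_apply_self]
    exact hK.dotProduct_mulVec_pos (star_ne_zero.mpr hi)

end TracePos

/-- **Strict decrease of the trace cost under information strengthening.**
If `Ω ≻ 0`, `η > 0` and `LΩ⁻¹Cᵀ ≠ 0`, then `Ω + ηCᵀC ≻ 0` and
`Tr(L(Ω + ηCᵀC)⁻¹Lᵀ) < Tr(LΩ⁻¹Lᵀ)`. -/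
theorem stmt_14 {p q r : ℕ} (Ω : Matrix (Fin p) (Fin p) ℝ) (hΩ : Ω.PosDef)
    (C : Matrix (Fin q) (Fin p) ℝ) (L : Matrix (Fin r) (Fin p) ℝ)
    (η : ℝ) (hη : 0 < η) (hLC : L * Ω⁻¹ * Cᵀ ≠ 0) :
    (Ω + η • (Cᵀ * C)).PosDef ∧
    (L * (Ω + η • (Cᵀ * C))⁻¹ * Lᵀ).trace < (L * Ω⁻¹ * Lᵀ).trace := by
  simp only [← conjTranspose_eq_transpose_of_trivial] at hLC ⊢
  refine ⟨hΩ.add_posSemidef ((posSemidef_conjTranspose_mul_self C).smul hη.le), ?_⟩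
  set K : Matrix (Fin q) (Fin q) ℝ := η⁻¹ • 1 + C * Ω⁻¹ * Cᴴ with hK_def
  have hK : K.PosDef :=
    (PosDef.one.smul (inv_pos.mpr hη)).add_posSemidef
      (hΩ.inv.posSemidef.mul_mul_conjTranspose_same C)
  have hcost : L * (Ω + η • (Cᴴ * C))⁻¹ * Lᴴ
      = L * Ω⁻¹ * Lᴴ - (L * Ω⁻¹ * Cᴴ) * K⁻¹ * (L * Ω⁻¹ * Cᴴ)ᴴ := by
    rw [inv_add_smul_mul_eq_sub _ _ hΩ.isUnit hη.ne' hK.isUnit, ← hK_def]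
    simp only [conjTranspose_mul, conjTranspose_conjTranspose, hΩ.inv.isHermitian.eq,
      Matrix.mul_sub, Matrix.sub_mul, Matrix.mul_assoc]
  rw [hcost, trace_sub, sub_lt_self_iff]
  exact hK.inv.trace_mul_mul_conjTranspose_pos hLC
end

section
/- Let Ξ be a real symmetric positive semidefinite m × m matrix, A a real m × m matrix, C a real q × m matrix, Π a real symmetric positive semidefinite q × q matrix, and Ω₂ a real symmetric m × m matrix. Define R(Ω₁) = Cᵀ Π C − Ω₂ + Ξ − Ξ A (Ω₁ + Aᵀ Ξ A)⁻¹ Aᵀ Ξ for symmetric Ω₁ with Ω₁ + Aᵀ Ξ A positive definite. If Ω₁ and Ω₁' are symmetric with Ω₁ + Aᵀ Ξ A positive definite and Ω₁' ⪰ Ω₁, then Ω₁' + Aᵀ Ξ A is positive definite and R(Ω₁') ⪰ R(Ω₁). -/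
open Matrix

/-- **Monotonicity of the Riccati residual in `Ω₁`.** With
`R(Ω₁) = CᵀΠC − Ω₂ + Ξ − ΞA(Ω₁ + AᵀΞA)⁻¹AᵀΞ`, if `Ξ ⪰ 0`, `Π ⪰ 0`,
`Ω₁ + AᵀΞA ≻ 0` and `Ω₁' ⪰ Ω₁` (symmetric), then `Ω₁' + AᵀΞA ≻ 0`
and `R(Ω₁') ⪰ R(Ω₁)`. -/
theorem stmt_17 {m q : ℕ} (Ξ : Matrix (Fin m) (Fin m) ℝ) (hΞ : Ξ.PosSemidef)
    (A : Matrix (Fin m) (Fin m) ℝ) (C : Matrix (Fin q) (Fin m) ℝ)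
    (P : Matrix (Fin q) (Fin q) ℝ) (hP : P.PosSemidef)
    (Ω₂ : Matrix (Fin m) (Fin m) ℝ) (hΩ₂ : Ω₂.IsHermitian)
    (R : Matrix (Fin m) (Fin m) ℝ → Matrix (Fin m) (Fin m) ℝ)
    (hR : ∀ Ω₁, R Ω₁ = Cᵀ * P * C - Ω₂ + Ξ - Ξ * A * (Ω₁ + Aᵀ * Ξ * A)⁻¹ * Aᵀ * Ξ)
    (Ω₁ Ω₁' : Matrix (Fin m) (Fin m) ℝ) (hΩ₁ : Ω₁.IsHermitian) (hΩ₁' : Ω₁'.IsHermitian)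
    (hPD : (Ω₁ + Aᵀ * Ξ * A).PosDef) (hle : (Ω₁' - Ω₁).PosSemidef) :
    (Ω₁' + Aᵀ * Ξ * A).PosDef ∧ (R Ω₁' - R Ω₁).PosSemidef := by
  set M := Ω₁ + Aᵀ * Ξ * A with hM
  set D := Ω₁' - Ω₁ with hD
  have hM' : Ω₁' + Aᵀ * Ξ * A = M + D := by
    rw [hM, hD]; abel
  have hPD' : (Ω₁' + Aᵀ * Ξ * A).PosDef := by
    rw [hM']
    exact hPD.add_posSemidef hle
  refine ⟨hPD', ?_⟩
  set M' := M + D with hM'def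
  have hPD'' : M'.PosDef := hM' ▸ hPD'
  have hMunit : IsUnit M.det := isUnit_iff_ne_zero.mpr (ne_of_gt hPD.det_pos)
  have hM'unit : IsUnit M'.det := isUnit_iff_ne_zero.mpr (ne_of_gt hPD''.det_pos)
  have hMM : M * M⁻¹ = 1 := mul_nonsing_inv _ hMunit
  have hMM2 : M⁻¹ * M = 1 := nonsing_inv_mul _ hMunit
  have hM'M' : M' * M'⁻¹ = 1 := mul_nonsing_inv _ hM'unit
  have hM'M'2 : M'⁻¹ * M' = 1 := nonsing_inv_mul _ hM'unit
  -- key identity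
  have key : M⁻¹ - M'⁻¹ = M'⁻¹ * (D + D * M⁻¹ * D) * M'⁻¹ := by
    have h1 : D + D * M⁻¹ * D = D * M⁻¹ * M' := by
      rw [hM'def, mul_add, mul_assoc D M⁻¹ M, hMM2, mul_one]
    have e1 : M'⁻¹ * (D + D * M⁻¹ * D) * M'⁻¹ = M'⁻¹ * D * M⁻¹ := by
      rw [h1, show M'⁻¹ * (D * M⁻¹ * M') * M'⁻¹ = M'⁻¹ * D * M⁻¹ * (M' * M'⁻¹) from by
        noncomm_ring, hM'M', mul_one]
    have h2 : D = M' - M := by rw [hM'def]; abel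
    have e2 : M'⁻¹ * D * M⁻¹ = M⁻¹ - M'⁻¹ := by
      rw [h2, mul_sub, sub_mul, hM'M'2, one_mul, mul_assoc, hMM, mul_one]
    rw [e1, e2]
  -- positivity of the middle term
  have hDherm : D.IsHermitian := hΩ₁'.sub hΩ₁
  have hmid : (D + D * M⁻¹ * D).PosSemidef := by
    have h3 : (D * M⁻¹ * Dᴴ).PosSemidef :=
      (hPD.posSemidef.inv).mul_mul_conjTranspose_same D
    rw [hDherm.eq] at h3
    exact hle.add h3
  have hM'invherm : (M'⁻¹).IsHermitian := (hPD''.posSemidef.inv).isHermitian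
  have hdiffps : (M⁻¹ - M'⁻¹).PosSemidef := by
    rw [key]
    have := hmid.mul_mul_conjTranspose_same M'⁻¹
    rwa [hM'invherm.eq] at this
  -- conjugate by Ξ A
  have hRdiff : R Ω₁' - R Ω₁ = (Ξ * A) * (M⁻¹ - M'⁻¹) * (Ξ * A)ᴴ := by
    rw [hR, hR]
    have hΞt : Ξᵀ = Ξ := by simpa using hΞ.isHermitian.eq
    have hXA : (Ξ * A)ᴴ = Aᵀ * Ξ := by
      rw [conjTranspose_mul]
      simp [conjTranspose_eq_transpose_of_trivial, hΞt]
    rw [hXA, ← hM, ← hM']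
    noncomm_ring
  rw [hRdiff]
  exact hdiffps.mul_mul_conjTranspose_same (Ξ * A)
end
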